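/- Let F ⊆ C be a nontrivial self-similar set in the middle-third Cantor set, generated by an IFS whose maps all have contraction ratios of the form s_i 3^{-m_i} with s_i = ±1 and m_i ∈ ℕ. Then either F or its reflection 1 − F = {1 − x : x ∈ F} can be written as a + E, where a ∈ C and E is the attractor of an IFS Φ = {φ_i(x) = s_i 3^{-m_i}x + d_i}_{i=1}^k with k ≥ 2 satisfying: s_1 = 1 and d_1 = 0; 0 ≤ d_i ≤ 1 for all i; d_i > 0 for at least one i; and d_i > 0 whenever s_i = −1. -/

import Mathlib

/-- The middle-third Cantor set. -/
def cantorC : Set ℝ :=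
  {x | ∃ ε : ℕ → ℝ, (∀ n, ε n = 0 ∨ ε n = 2) ∧ x = ∑' n : ℕ, ε n / 3 ^ (n + 1)}

lemma summable_two : Summable (fun n : ℕ => (2:ℝ) / 3 ^ (n + 1)) := by
  have : (fun n : ℕ => (2:ℝ) / 3 ^ (n + 1)) = fun n : ℕ => (2/3) * (1/3:ℝ) ^ n := by
    funext n; rw [pow_succ, one_div, inv_pow]; ring
  rw [this]
  exact (summable_geometric_of_lt_one (by norm_num) (by norm_num)).mul_left _

lemma two_geom : ∑' n : ℕ, (2:ℝ) / 3 ^ (n + 1) = 1 := by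
  have h : (fun n : ℕ => (2:ℝ) / 3 ^ (n + 1)) = fun n : ℕ => (2/3) * (1/3:ℝ) ^ n := by
    funext n; rw [pow_succ, one_div, inv_pow]; ring
  rw [h, tsum_mul_left, tsum_geometric_of_lt_one (by norm_num) (by norm_num)]
  norm_num

lemma summable_eps (ε : ℕ → ℝ) (h : ∀ n, ε n = 0 ∨ ε n = 2) :
    Summable (fun n => ε n / 3 ^ (n + 1)) := by
  refine Summable.of_nonneg_of_le (fun n => ?_) (fun n => ?_) summable_two
  · rcases h n with h' | h' <;> rw [h'] <;> positivity
  · have h2 : ε n ≤ 2 := by rcases h n with h' | h' <;> rw [h'] <;> norm_num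
    gcongr

lemma cantorC_subset_Icc : cantorC ⊆ Set.Icc 0 1 := by
  rintro x ⟨ε, hε, rfl⟩
  constructor
  · apply tsum_nonneg
    intro n; rcases hε n with h' | h' <;> rw [h'] <;> positivity
  · rw [← two_geom]
    refine Summable.tsum_le_tsum (fun n => ?_) (summable_eps ε hε) summable_two
    gcongr
    rcases hε n with h' | h' <;> rw [h'] <;> norm_num

lemma cantorC_reflect {x : ℝ} (hx : x ∈ cantorC) : 1 - x ∈ cantorC := by
  obtain ⟨ε, hε, rfl⟩ := hx
  refine ⟨fun n => 2 - ε n, fun n => ?_, ?_⟩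
  · rcases hε n with h' | h' <;> simp [h']
  · have := (Summable.tsum_sub summable_two (summable_eps ε hε)).symm
    rw [two_geom] at this
    rw [this]
    congr 1; funext n; rw [sub_div]


lemma conj_attr {K : ℕ} (φ ψ : Fin K → ℝ → ℝ) (t : ℝ → ℝ) (F : Set ℝ)
    (h : ∀ i x, ψ i (t x) = t (φ i x)) (hF : F = ⋃ i, φ i '' F) :
    t '' F = ⋃ i, ψ i '' (t '' F) := by
  calc t '' F = t '' ⋃ i, φ i '' F := by rw [← hF]
    _ = ⋃ i, t '' (φ i '' F) := Set.image_iUnion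
    _ = ⋃ i, ψ i '' (t '' F) := by
        refine Set.iUnion_congr fun i => ?_
        rw [Set.image_image, Set.image_image]
        exact Set.image_congr' (fun x => (h i x).symm)

lemma half (K : ℕ) (hK : 0 < K)
    (S : Fin K → ℝ) (hS : ∀ i, S i = 1 ∨ S i = -1)
    (M : Fin K → ℕ) (hM : ∀ i, 1 ≤ M i)
    (D : Fin K → ℝ)
    (F : Set ℝ) (hFne : F.Nonempty) (hFc : IsCompact F)
    (hFC : F ⊆ cantorC)
    (hattr : F = ⋃ i, (fun x => S i * x / 3 ^ M i + D i) '' F)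
    (hnontriv : ∃ x ∈ F, ∃ y ∈ F, x ≠ y)
    (j : Fin K) (hj1 : S j = 1)
    (hjfix : S j * sInf F / 3 ^ M j + D j = sInf F) :
    ∃ a ∈ cantorC, ∃ k : ℕ, ∃ hk : 2 ≤ k,
      ∃ s : Fin k → ℝ, ∃ m : Fin k → ℕ, ∃ d : Fin k → ℝ, ∃ E : Set ℝ,
        (∀ i, s i = 1 ∨ s i = -1) ∧ (∀ i, 1 ≤ m i) ∧
        s ⟨0, Nat.lt_of_lt_of_le (by norm_num) hk⟩ = 1 ∧ d ⟨0, Nat.lt_of_lt_of_le (by norm_num) hk⟩ = 0 ∧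
        (∀ i, 0 ≤ d i ∧ d i ≤ 1) ∧
        (∃ i, 0 < d i) ∧
        (∀ i, s i = -1 → 0 < d i) ∧
        E.Nonempty ∧ IsCompact E ∧
        E = ⋃ i, (fun x => s i * x / 3 ^ m i + d i) '' E ∧
        F = (fun x => a + x) '' E := by
  obtain ⟨a, ha⟩ : ∃ a : ℝ, a = sInf F := ⟨_, rfl⟩
  rw [← ha] at hjfix
  have haF : a ∈ F := by rw [ha]; exact hFc.sInf_mem hFne
  have hlb : ∀ x ∈ F, a ≤ x := fun x hx => ha ▸ csInf_le hFc.bddBelow hx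
  have hF01 : ∀ x ∈ F, 0 ≤ x ∧ x ≤ 1 := fun x hx => cantorC_subset_Icc (hFC hx)
  obtain ⟨E, hE⟩ : ∃ E : Set ℝ, E = (fun x => -a + x) '' F := ⟨_, rfl⟩
  have hFE : F = (fun x => a + x) '' E := by
    rw [hE, Set.image_image]
    simp
  have h0E : (0:ℝ) ∈ E := by rw [hE]; exact ⟨a, haF, by ring⟩
  obtain ⟨d, hd⟩ : ∃ d : Fin K → ℝ, d = fun i => S i * a / 3 ^ M i + D i - a := ⟨_, rfl⟩
  have hEattr : E = ⋃ i, (fun x => S i * x / 3 ^ M i + d i) '' E := by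
    rw [hE]
    refine conj_attr _ _ _ F (fun i x => ?_) hattr
    simp only [hd]
    ring
  have hE01 : ∀ x ∈ E, 0 ≤ x ∧ x ≤ 1 := by
    rw [hE]
    rintro _ ⟨x, hx, rfl⟩
    have h1 := hF01 x hx
    have h2 := hlb x hx
    have h3 := (hF01 a haF).1
    constructor <;> simp <;> linarith
  have hpsi_mem : ∀ i, ∀ y ∈ E, S i * y / 3 ^ M i + d i ∈ E := by
    intro i y hy
    rw [hEattr]
    exact Set.mem_iUnion.2 ⟨i, y, hy, rfl⟩
  have hdE : ∀ i, d i ∈ E := by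
    intro i
    have := hpsi_mem i 0 h0E
    simpa using this
  have hdval : ∀ i, d i = S i * a / 3 ^ M i + D i - a := fun i => by rw [hd]
  have hd01 : ∀ i, 0 ≤ d i ∧ d i ≤ 1 := fun i => hE01 _ (hdE i)
  -- a positive element of E
  obtain ⟨x₀, hx₀E, hx₀pos⟩ : ∃ x₀ ∈ E, 0 < x₀ := by
    obtain ⟨x, hx, y, hy, hne⟩ := hnontriv
    rcases eq_or_ne x a with hxa | hxa
    · refine ⟨-a + y, by rw [hE]; exact ⟨y, hy, rfl⟩, ?_⟩
      have hay : a ≠ y := fun h => hne (hxa.trans h)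
      linarith [(hlb y hy).lt_of_ne hay]
    · refine ⟨-a + x, by rw [hE]; exact ⟨x, hx, rfl⟩, ?_⟩
      linarith [(hlb x hx).lt_of_ne (Ne.symm hxa)]
  have hdneg : ∀ i, S i = -1 → 0 < d i := by
    intro i hi
    by_contra h
    push_neg at h
    have hm := hpsi_mem i x₀ hx₀E
    have h3 : (0:ℝ) < 3 ^ M i := by positivity
    have hdiv : 0 < x₀ / 3 ^ M i := div_pos hx₀pos h3
    have hlt : S i * x₀ / 3 ^ M i + d i < 0 := by
      rw [hi]
      have hre : -1 * x₀ / 3 ^ M i = -(x₀ / 3 ^ M i) := by ring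
      rw [hre]
      linarith
    exact absurd (hE01 _ hm).1 (not_le.2 hlt)
  have hEc : IsCompact E := by
    rw [hE]; exact hFc.image (continuous_const.add continuous_id)
  have hEne : E.Nonempty := ⟨0, h0E⟩
  have hdpos : ∃ i, 0 < d i := by
    by_contra h
    push_neg at h
    have hall : ∀ i, d i = 0 := fun i => le_antisymm (h i) (hd01 i).1
    have hallS : ∀ i, S i = 1 :=
      fun i => (hS i).resolve_right fun hi => (hdneg i hi).ne' (hall i)
    set b := sSup E with hb
    have hbE : b ∈ E := hEc.sSup_mem hEne
    have hub : ∀ x ∈ E, x ≤ b := fun x hx => le_csSup hEc.bddAbove hx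
    have hbpos : 0 < b := lt_of_lt_of_le hx₀pos (hub _ hx₀E)
    have : b ∈ ⋃ i, (fun x => S i * x / 3 ^ M i + d i) '' E := by rw [← hEattr]; exact hbE
    obtain ⟨i, y, hyE, hyb⟩ := by simpa [Set.mem_iUnion] using this
    rw [hallS i, hall i] at hyb
    have h31 : (3:ℝ) ≤ 3 ^ M i := by
      calc (3:ℝ) = 3 ^ 1 := (pow_one 3).symm
      _ ≤ 3 ^ M i := pow_le_pow_right₀ (by norm_num) (hM i)
    have hyub := hub y hyE
    have h3 : (0:ℝ) < 3 ^ M i := by positivity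
    have hyeq : y = b * 3 ^ M i := by field_simp at hyb; linarith
    nlinarith
  -- assemble
  have hdj : d j = 0 := by rw [hdval j]; linarith [hjfix]
  refine ⟨a, hFC haF, K + 1, by omega, Fin.cons (S j) S, Fin.cons (M j) M,
    (Fin.cons (d j) d : Fin (K+1) → ℝ), E, ?_, ?_, ?_, ?_, ?_, ?_, ?_, hEne, hEc, ?_, hFE⟩
  · intro i
    refine Fin.cases ?_ ?_ i <;> simp [hS, hj1]
  · intro i
    refine Fin.cases ?_ ?_ i <;> simp [hM]
  · have : (⟨0, by omega⟩ : Fin (K + 1)) = 0 := rfl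
    rw [this, Fin.cons_zero, hj1]
  · have : (⟨0, by omega⟩ : Fin (K + 1)) = 0 := rfl
    rw [this, Fin.cons_zero, hdj]
  · intro i
    refine Fin.cases ?_ ?_ i <;> simp [hd01, hdj]
  · obtain ⟨i, hi⟩ := hdpos
    exact ⟨i.succ, by simpa using hi⟩
  · intro i
    refine Fin.cases ?_ ?_ i
    · simp [hj1, hdj]
      intro h
      norm_num at h
    · intro i
      simp only [Fin.cons_succ]
      exact hdneg i
  · have key : (⋃ i : Fin (K + 1),
        (fun x => (Fin.cons (S j) S : Fin (K+1) → ℝ) i * x / 3 ^ (Fin.cons (M j) M : Fin (K+1) → ℕ) i + (Fin.cons (d j) d : Fin (K+1) → ℝ) i) '' E)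
        = ⋃ i : Fin K, (fun x => S i * x / 3 ^ M i + d i) '' E := by
      apply Set.Subset.antisymm
      · refine Set.iUnion_subset fun i => ?_
        refine Fin.cases ?_ ?_ i
        · simp only [Fin.cons_zero]
          exact Set.subset_iUnion (fun i => (fun x => S i * x / 3 ^ M i + d i) '' E) j
        · intro i
          simp only [Fin.cons_succ]
          exact Set.subset_iUnion (fun i => (fun x => S i * x / 3 ^ M i + d i) '' E) i
      · refine Set.iUnion_subset fun i => ?_
        have : (fun x => S i * x / 3 ^ M i + d i) '' E =
            (fun x => (Fin.cons (S j) S : Fin (K+1) → ℝ) i.succ * x / 3 ^ (Fin.cons (M j) M : Fin (K+1) → ℕ) i.succ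
              + (Fin.cons (d j) d : Fin (K+1) → ℝ) i.succ) '' E := by
          simp only [Fin.cons_succ]
        rw [this]
        exact Set.subset_iUnion
          (fun p : Fin (K+1) => (fun x => (Fin.cons (S j) S : Fin (K+1) → ℝ) p * x
            / 3 ^ (Fin.cons (M j) M : Fin (K+1) → ℕ) p + (Fin.cons (d j) d : Fin (K+1) → ℝ) p) '' E)
          i.succ
    rw [key]
    exact hEattr

theorem stmt_18 (K : ℕ) (hK : 0 < K)
    (S : Fin K → ℝ) (hS : ∀ i, S i = 1 ∨ S i = -1)
    (M : Fin K → ℕ) (hM : ∀ i, 1 ≤ M i)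
    (D : Fin K → ℝ)
    (F : Set ℝ) (hFne : F.Nonempty) (hFc : IsCompact F)
    (hFC : F ⊆ cantorC)
    (hattr : F = ⋃ i, (fun x => S i * x / 3 ^ M i + D i) '' F)
    (hnontriv : ∃ x ∈ F, ∃ y ∈ F, x ≠ y) :
    ∃ a ∈ cantorC, ∃ k : ℕ, ∃ hk : 2 ≤ k,
      ∃ s : Fin k → ℝ, ∃ m : Fin k → ℕ, ∃ d : Fin k → ℝ, ∃ E : Set ℝ,
        (∀ i, s i = 1 ∨ s i = -1) ∧ (∀ i, 1 ≤ m i) ∧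
        s ⟨0, by omega⟩ = 1 ∧ d ⟨0, by omega⟩ = 0 ∧
        (∀ i, 0 ≤ d i ∧ d i ≤ 1) ∧
        (∃ i, 0 < d i) ∧
        (∀ i, s i = -1 → 0 < d i) ∧
        E.Nonempty ∧ IsCompact E ∧
        E = ⋃ i, (fun x => s i * x / 3 ^ m i + d i) '' E ∧
        (F = (fun x => a + x) '' E ∨ (fun x => 1 - x) '' F = (fun x => a + x) '' E) := by
  have hmem : ∀ x, x ∈ F ↔ ∃ i, ∃ y ∈ F, S i * y / 3 ^ M i + D i = x := by
    intro x
    constructor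
    · intro hx
      rw [hattr] at hx
      simpa [Set.mem_iUnion] using hx
    · rintro ⟨i, y, hy, rfl⟩
      rw [hattr]
      exact Set.mem_iUnion.2 ⟨i, y, hy, rfl⟩
  obtain ⟨a, haeq⟩ : ∃ a : ℝ, a = sInf F := ⟨_, rfl⟩
  obtain ⟨b, hbeq⟩ : ∃ b : ℝ, b = sSup F := ⟨_, rfl⟩
  have hab : a ∈ F := by rw [haeq]; exact hFc.sInf_mem hFne
  have hbb : b ∈ F := by rw [hbeq]; exact hFc.sSup_mem hFne
  have hlb : ∀ x ∈ F, a ≤ x := fun x hx => haeq ▸ csInf_le hFc.bddBelow hx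
  have hub : ∀ x ∈ F, x ≤ b := fun x hx => hbeq ▸ le_csSup hFc.bddAbove hx
  have h3pos : ∀ i : Fin K, (0:ℝ) < 3 ^ M i := fun i => by positivity
  -- preimage of the min
  obtain ⟨i₀, y₀, hy₀, hi₀⟩ := (hmem a).1 hab
  rcases hS i₀ with hsi₀ | hsi₀
  · -- case A : positive map fixes the min
    have hfix : S i₀ * a / 3 ^ M i₀ + D i₀ = a := by
      have h1 : S i₀ * a / 3 ^ M i₀ + D i₀ ∈ F := (hmem _).2 ⟨i₀, a, hab, rfl⟩
      have h2 : a ≤ S i₀ * a / 3 ^ M i₀ + D i₀ := hlb _ h1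
      have h3 : a / 3 ^ M i₀ ≤ y₀ / 3 ^ M i₀ :=
        (div_le_div_iff_of_pos_right (h3pos i₀)).mpr (hlb y₀ hy₀)
      rw [hsi₀] at hi₀ h2 ⊢
      ring_nf at hi₀ h2 h3 ⊢
      linarith
    rw [haeq] at hfix
    obtain ⟨a', ha', rest⟩ := half K hK S hS M hM D F hFne hFc hFC hattr hnontriv i₀ hsi₀ hfix
    obtain ⟨k, hk, s, m, d, E, h1, h2, h3, h4, h5, h6, h7, h8, h9, h10, h11⟩ := rest
    exact ⟨a', ha', k, hk, s, m, d, E, h1, h2, h3, h4, h5, h6, h7, h8, h9, h10, Or.inl h11⟩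
  · -- min is hit by a negative map; then φ_{i₀} b = a
    have hib : S i₀ * b / 3 ^ M i₀ + D i₀ = a := by
      have h1 : S i₀ * b / 3 ^ M i₀ + D i₀ ∈ F := (hmem _).2 ⟨i₀, b, hbb, rfl⟩
      have h2 : a ≤ S i₀ * b / 3 ^ M i₀ + D i₀ := hlb _ h1
      have h3 : y₀ / 3 ^ M i₀ ≤ b / 3 ^ M i₀ :=
        (div_le_div_iff_of_pos_right (h3pos i₀)).mpr (hub y₀ hy₀)
      rw [hsi₀] at hi₀ h2 ⊢
      ring_nf at hi₀ h2 h3 ⊢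
      linarith
    -- preimage of the max
    obtain ⟨i₁, y₁, hy₁, hi₁⟩ := (hmem b).1 hbb
    rcases hS i₁ with hsi₁ | hsi₁
    · -- case B : positive map fixes the max; reflect
      have hfixb : S i₁ * b / 3 ^ M i₁ + D i₁ = b := by
        have h1 : S i₁ * b / 3 ^ M i₁ + D i₁ ∈ F := (hmem _).2 ⟨i₁, b, hbb, rfl⟩
        have h2 : S i₁ * b / 3 ^ M i₁ + D i₁ ≤ b := hub _ h1
        have h3 : y₁ / 3 ^ M i₁ ≤ b / 3 ^ M i₁ :=
          (div_le_div_iff_of_pos_right (h3pos i₁)).mpr (hub y₁ hy₁)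
        rw [hsi₁] at hi₁ h2 ⊢
        ring_nf at hi₁ h2 h3 ⊢
        linarith
      obtain ⟨F', hF'⟩ : ∃ F' : Set ℝ, F' = (fun x => 1 - x) '' F := ⟨_, rfl⟩
      obtain ⟨D', hD'⟩ : ∃ D' : Fin K → ℝ, D' = fun i => 1 - S i / 3 ^ M i - D i := ⟨_, rfl⟩
      have hF'attr : F' = ⋃ i, (fun x => S i * x / 3 ^ M i + D' i) '' F' := by
        rw [hF']
        refine conj_attr _ _ _ F (fun i x => ?_) hattr
        simp only [hD']
        field_simp
        ring
      have hD'v : ∀ i, D' i = 1 - S i / 3 ^ M i - D i := fun i => by rw [hD']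
      have hF'ne : F'.Nonempty := by rw [hF']; exact hFne.image _
      have hF'c : IsCompact F' := by
        rw [hF']; exact hFc.image (continuous_const.sub continuous_id)
      have hF'C : F' ⊆ cantorC := by
        rw [hF']
        rintro _ ⟨x, hx, rfl⟩
        exact cantorC_reflect (hFC hx)
      have hF'nt : ∃ x ∈ F', ∃ y ∈ F', x ≠ y := by
        rw [hF']
        obtain ⟨x, hx, y, hy, hne⟩ := hnontriv
        exact ⟨1 - x, ⟨x, hx, rfl⟩, 1 - y, ⟨y, hy, rfl⟩, fun h => hne (by linarith)⟩
      have hinf : sInf F' = 1 - b := by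
        apply le_antisymm
        · exact csInf_le hF'c.bddBelow (by rw [hF']; exact ⟨b, hbb, rfl⟩)
        · refine le_csInf hF'ne ?_
          rw [hF']
          rintro _ ⟨x, hx, rfl⟩
          have := hub x hx
          show 1 - b ≤ 1 - x
          linarith
      have hfix' : S i₁ * sInf F' / 3 ^ M i₁ + D' i₁ = sInf F' := by
        rw [hinf, hD'v]
        rw [hsi₁] at hfixb ⊢
        have h3 := h3pos i₁
        field_simp
        field_simp at hfixb
        linarith
      obtain ⟨a', ha', rest⟩ :=
        half K hK S hS M hM D' F' hF'ne hF'c hF'C hF'attr hF'nt i₁ hsi₁ hfix'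
      obtain ⟨k, hk, s, m, d, E, h1, h2, h3, h4, h5, h6, h7, h8, h9, h10, h11⟩ := rest
      rw [hF'] at h11
      exact ⟨a', ha', k, hk, s, m, d, E, h1, h2, h3, h4, h5, h6, h7, h8, h9, h10, Or.inr h11⟩
    · -- case C : both extremes hit by negative maps; use the squared IFS
      have hib' : S i₁ * a / 3 ^ M i₁ + D i₁ = b := by
        have h1 : S i₁ * a / 3 ^ M i₁ + D i₁ ∈ F := (hmem _).2 ⟨i₁, a, hab, rfl⟩
        have h2 : S i₁ * a / 3 ^ M i₁ + D i₁ ≤ b := hub _ h1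
        have h3 : a / 3 ^ M i₁ ≤ y₁ / 3 ^ M i₁ :=
          (div_le_div_iff_of_pos_right (h3pos i₁)).mpr (hlb y₁ hy₁)
        rw [hsi₁] at hi₁ h2 ⊢
        ring_nf at hi₁ h2 h3 ⊢
        linarith
      obtain ⟨e, he⟩ : ∃ e' : Fin K × Fin K ≃ Fin (K * K), e' = finProdFinEquiv := ⟨_, rfl⟩
      obtain ⟨S2, hS2⟩ : ∃ S2 : Fin (K * K) → ℝ,
        S2 = fun p => S (e.symm p).1 * S (e.symm p).2 := ⟨_, rfl⟩
      obtain ⟨M2, hM2⟩ : ∃ M2 : Fin (K * K) → ℕ,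
        M2 = fun p => M (e.symm p).1 + M (e.symm p).2 := ⟨_, rfl⟩
      obtain ⟨D2, hD2⟩ : ∃ D2 : Fin (K * K) → ℝ,
        D2 = fun p => S (e.symm p).1 * D (e.symm p).2 / 3 ^ M (e.symm p).1 + D (e.symm p).1 :=
        ⟨_, rfl⟩
      have hcomp : ∀ (p : Fin (K * K)) (x : ℝ), S2 p * x / 3 ^ M2 p + D2 p =
          S (e.symm p).1 * (S (e.symm p).2 * x / 3 ^ M (e.symm p).2 + D (e.symm p).2)
            / 3 ^ M (e.symm p).1 + D (e.symm p).1 := by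
        intro p x
        simp only [hS2, hM2, hD2]
        have hp1 := h3pos (e.symm p).1
        have hp2 := h3pos (e.symm p).2
        rw [pow_add]
        field_simp
        ring
      have hattr2 : F = ⋃ p : Fin (K * K), (fun x => S2 p * x / 3 ^ M2 p + D2 p) '' F := by
        ext x
        simp only [Set.mem_iUnion, Set.mem_image]
        constructor
        · intro hx
          obtain ⟨i, y, hy, h1⟩ := (hmem x).1 hx
          obtain ⟨i2, z, hz, h2⟩ := (hmem y).1 hy
          refine ⟨e (i, i2), z, hz, ?_⟩
          rw [hcomp]
          simp only [Equiv.symm_apply_apply]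
          rw [h2, h1]
        · rintro ⟨p, z, hz, rfl⟩
          rw [hcomp]
          have h1 : S (e.symm p).2 * z / 3 ^ M (e.symm p).2 + D (e.symm p).2 ∈ F :=
            (hmem _).2 ⟨_, z, hz, rfl⟩
          exact (hmem _).2 ⟨_, _, h1, rfl⟩
      have hS2v : ∀ p, S2 p = 1 ∨ S2 p = -1 := by
        intro p
        simp only [hS2]
        rcases hS (e.symm p).1 with h | h <;> rcases hS (e.symm p).2 with h' | h' <;>
          simp [h, h']
      have hM2v : ∀ p, 1 ≤ M2 p := by
        intro p
        simp only [hM2]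
        have := hM (e.symm p).1
        omega
      obtain ⟨j2, hj2⟩ : ∃ j2, j2 = e (i₀, i₁) := ⟨_, rfl⟩
      have hj2s : S2 j2 = 1 := by
        simp only [hS2, hj2]
        simp only [Equiv.symm_apply_apply]
        rw [hsi₀, hsi₁]
        norm_num
      have hj2fix : S2 j2 * sInf F / 3 ^ M2 j2 + D2 j2 = sInf F := by
        rw [hcomp, hj2]
        simp only [Equiv.symm_apply_apply]
        rw [← haeq, hib', hib]
      obtain ⟨a', ha', rest⟩ :=
        half (K * K) (Nat.mul_pos hK hK) S2 hS2v M2 hM2v D2 F hFne hFc hFC hattr2 hnontriv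
          j2 hj2s hj2fix
      obtain ⟨k, hk, s, m, d, E, h1, h2, h3, h4, h5, h6, h7, h8, h9, h10, h11⟩ := rest
      exact ⟨a', ha', k, hk, s, m, d, E, h1, h2, h3, h4, h5, h6, h7, h8, h9, h10, Or.inl h11⟩
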